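/- If β_n = 1 for all n, then for every real c, lim_{n → ∞} d_n(t_n + c·w_n) = 2·e^{−c}; that is, the sequence has a profile cutoff at (t_n, w_n) with profile F(c) = 2e^{−c}. -/

import Mathlib

/-!
With `β_n = 1` the time `t = t_n + c w_n` equals `(1 + ℓ_n / n)(1 + c / n)`, so the first term of
`d_n(t)` is exactly `e^{-c}`. The remaining terms form a Riemann sum of `x^{-t}` over the arithmetic
progression `e^n + k e^{-n}`; telescoping `x^{1-t}` traps `(t - 1)` times it between
`(2 e^n)^{1-t} - (9^n e^{-n})^{1-t}` and `e^{n(1-t)}`. Writing `δ = n (t - 1) = ℓ_n + c + o(1)`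
and using `n e^{-ℓ_n} = log n`, the main term `n e^{-δ} / δ` tends to `e^{-c}`, while the tail
`n e^{-κδ} / δ` with `κ = log 9 - 1 > 1` tends to `0`.
-/

open Filter Real
open scoped Topology

/-- `ℓ_n = log(n / log n)`. -/
noncomputable def ell (n : ℕ) : ℝ := Real.log (n / Real.log n)

/-- Distance to equilibrium of the Ornstein–Uhlenbeck example of Barrera–Ycart:
`d_n(t) = Σ_{i=1}^{9^n} a_{i,n} e^{-ρ_{i,n} t}` with `a_{1,n} = e^n`,
`ρ_{1,n} = n/(1 + (β_n/n) ℓ_n)`, and for `2 ≤ i ≤ 9^n`: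
`a_{i,n} = e^{-n}`, `ρ_{i,n} = log(e^n + (i-1) e^{-n})`. -/
noncomputable def dCut (β : ℕ → ℝ) (n : ℕ) (t : ℝ) : ℝ :=
  Real.exp n * Real.exp (-((n : ℝ) / (1 + β n / n * ell n)) * t) +
    ∑ i ∈ Finset.Icc (2 : ℕ) (9 ^ n),
      Real.exp (-(n : ℝ)) *
        Real.exp (-Real.log (Real.exp n + ((i : ℝ) - 1) * Real.exp (-(n : ℝ))) * t)

/-- Cutoff location `t_n = 1 + β_n ℓ_n / n`. -/
noncomputable def cutT (β : ℕ → ℝ) (n : ℕ) : ℝ := 1 + β n * ell n / n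

/-- Window width `w_n = t_n / n`. -/
noncomputable def cutW (β : ℕ → ℝ) (n : ℕ) : ℝ := cutT β n / n

/-- Correction term `r_n = ℓ_n w_n`. -/
noncomputable def cutR (β : ℕ → ℝ) (n : ℕ) : ℝ := ell n * cutW β n

open Finset intervalIntegral

section PowerSums

variable {t u v : ℝ}

theorem rpow_one_sub_sub_rpow_one_sub_eq_integral (ht : t ≠ 1) (hu : 0 < u) (huv : u ≤ v) :
    u ^ (1 - t) - v ^ (1 - t) = (t - 1) * ∫ x in u..v, x ^ (-t) := by
  rw [integral_rpow (Or.inr ⟨by contrapose! ht; linarith,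
    Set.notMem_uIcc_of_lt hu (hu.trans_le huv)⟩), neg_add_eq_sub]
  have : (1 : ℝ) - t ≠ 0 := sub_ne_zero.mpr (Ne.symm ht)
  field_simp
  ring

theorem sub_one_mul_mul_rpow_neg_le (ht : 1 < t) (hu : 0 < u) (huv : u ≤ v) :
    (t - 1) * ((v - u) * v ^ (-t)) ≤ u ^ (1 - t) - v ^ (1 - t) := by
  rw [rpow_one_sub_sub_rpow_one_sub_eq_integral ht.ne' hu huv]
  gcongr
  rw [← smul_eq_mul, ← integral_const]
  refine integral_mono_on huv (by simp)
    (intervalIntegrable_rpow (Or.inr (Set.notMem_uIcc_of_lt hu (hu.trans_le huv)))) fun x hx => ?_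
  exact rpow_le_rpow_of_nonpos (hu.trans_le hx.1) hx.2 (by linarith)

theorem rpow_one_sub_sub_le_sub_one_mul_mul_rpow_neg (ht : 1 < t) (hu : 0 < u) (huv : u ≤ v) :
    u ^ (1 - t) - v ^ (1 - t) ≤ (t - 1) * ((v - u) * u ^ (-t)) := by
  rw [rpow_one_sub_sub_rpow_one_sub_eq_integral ht.ne' hu huv]
  gcongr
  rw [← smul_eq_mul, ← integral_const]
  refine integral_mono_on huv
    (intervalIntegrable_rpow (Or.inr (Set.notMem_uIcc_of_lt hu (hu.trans_le huv)))) (by simp)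
    fun x hx => ?_
  exact rpow_le_rpow_of_nonpos hu hx.1 (by linarith)

variable {a h : ℝ}

theorem sub_one_mul_sum_rpow_neg_le (ht : 1 < t) (ha : 0 < a) (hh : 0 < h) (N : ℕ) :
    (t - 1) * ∑ k ∈ range N, h * (a + (k + 1) * h) ^ (-t) ≤
      a ^ (1 - t) - (a + N * h) ^ (1 - t) := by
  have step : ∀ k : ℕ, (t - 1) * (h * (a + (k + 1) * h) ^ (-t)) ≤
      (a + k * h) ^ (1 - t) - (a + (k + 1) * h) ^ (1 - t) := fun k => by
    simpa [add_mul, ← add_assoc] using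
      sub_one_mul_mul_rpow_neg_le ht (u := a + k * h) (v := a + k * h + h) (by positivity)
        (by linarith)
  calc (t - 1) * ∑ k ∈ range N, h * (a + (k + 1) * h) ^ (-t)
      ≤ ∑ k ∈ range N, ((a + k * h) ^ (1 - t) - (a + (k + 1 : ℕ) * h) ^ (1 - t)) := by
        rw [mul_sum]
        exact sum_le_sum fun k _ => by push_cast; exact step k
    _ = a ^ (1 - t) - (a + N * h) ^ (1 - t) := by
        rw [sum_range_sub' (fun k : ℕ => (a + k * h) ^ (1 - t))]
        simp

theorem le_sub_one_mul_sum_rpow_neg (ht : 1 < t) (ha : 0 < a) (hh : 0 < h) (N : ℕ) :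
    (a + h) ^ (1 - t) - (a + (N + 1) * h) ^ (1 - t) ≤
      (t - 1) * ∑ k ∈ range N, h * (a + (k + 1) * h) ^ (-t) := by
  have step : ∀ k : ℕ, (a + (k + 1) * h) ^ (1 - t) - (a + (k + 1 + 1) * h) ^ (1 - t) ≤
      (t - 1) * (h * (a + (k + 1) * h) ^ (-t)) := fun k => by
    simpa [add_mul, ← add_assoc] using
      rpow_one_sub_sub_le_sub_one_mul_mul_rpow_neg ht (u := a + (k + 1) * h)
        (v := a + (k + 1) * h + h) (by positivity) (by linarith)
  calc (a + h) ^ (1 - t) - (a + (N + 1) * h) ^ (1 - t)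
      = ∑ k ∈ range N,
          ((a + (k + 1 : ℕ) * h) ^ (1 - t) - (a + (k + 1 + 1 : ℕ) * h) ^ (1 - t)) := by
        rw [sum_range_sub' (fun k : ℕ => (a + (k + 1 : ℕ) * h) ^ (1 - t))]
        simp
    _ ≤ (t - 1) * ∑ k ∈ range N, h * (a + (k + 1) * h) ^ (-t) := by
        rw [mul_sum]
        exact sum_le_sum fun k _ => by push_cast; exact step k

end PowerSums

theorem ell_eq {n : ℕ} (hn : 2 ≤ n) : ell n = log n - log (log n) := by
  have : 0 < log n := log_pos (by exact_mod_cast hn)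
  rw [ell, log_div (by positivity) this.ne']

theorem natCast_mul_exp_neg_ell {n : ℕ} (hn : 2 ≤ n) : n * exp (-ell n) = log n := by
  have : 0 < log n := log_pos (by exact_mod_cast hn)
  rw [ell, exp_neg, exp_log (by positivity)]
  field_simp

theorem tendsto_log_div_self_atTop : Tendsto (fun x : ℝ => log x / x) atTop (𝓝 0) := by
  simpa using tendsto_pow_log_div_mul_add_atTop 1 0 1 one_ne_zero

theorem tendsto_ell_div_log : Tendsto (fun n : ℕ => ell n / log n) atTop (𝓝 1) := by
  have hlog : Tendsto (fun n : ℕ => log n) atTop atTop :=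
    tendsto_log_atTop.comp tendsto_natCast_atTop_atTop
  have := (tendsto_log_div_self_atTop.comp hlog).const_sub 1
  rw [sub_zero] at this
  refine this.congr' ?_
  filter_upwards [eventually_ge_atTop 2] with n hn
  have : 0 < log n := log_pos (by exact_mod_cast hn)
  simp only [Function.comp_apply, ell_eq hn]
  field_simp

theorem tendsto_ell_atTop : Tendsto ell atTop atTop := by
  refine (tendsto_ell_div_log.pos_mul_atTop one_pos
    (tendsto_log_atTop.comp tendsto_natCast_atTop_atTop)).congr' ?_
  filter_upwards [eventually_ge_atTop 2] with n hn
  have : 0 < log n := log_pos (by exact_mod_cast hn)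
  simp only [Function.comp_apply]
  field_simp

theorem tendsto_ell_div_natCast : Tendsto (fun n : ℕ => ell n / n) atTop (𝓝 0) := by
  have := tendsto_ell_div_log.mul (tendsto_log_div_self_atTop.comp tendsto_natCast_atTop_atTop)
  rw [one_mul] at this
  refine this.congr' ?_
  filter_upwards [eventually_ge_atTop 2] with n hn
  have : 0 < log n := log_pos (by exact_mod_cast hn)
  simp only [Function.comp_apply]
  field_simp

-- `0 ^ (κ - 1)` is `1` for `κ = 1` and `0` for `κ > 1`.
theorem tendsto_natCast_mul_exp_neg_mul_div {δ : ℕ → ℝ} {c κ : ℝ} (hκ : 1 ≤ κ)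
    (hδ : Tendsto (fun n => δ n - ell n) atTop (𝓝 c)) :
    Tendsto (fun n : ℕ => n * exp (-(κ * δ n)) / δ n) atTop
      (𝓝 (0 ^ (κ - 1) * exp (-(κ * c)))) := by
  have hlog : Tendsto (fun n : ℕ => log n) atTop atTop :=
    tendsto_log_atTop.comp tendsto_natCast_atTop_atTop
  have hlogδ : Tendsto (fun n : ℕ => log n / δ n) atTop (𝓝 1) := by
    have := (tendsto_ell_div_log.add (hδ.div_atTop hlog)).inv₀ (by norm_num)
    rw [add_zero, inv_one] at this
    refine this.congr' ?_
    filter_upwards [eventually_ge_atTop 2] with n hn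
    have : 0 < log n := log_pos (by exact_mod_cast hn)
    rw [← add_div, add_sub_cancel, inv_div]
  have hpow : Tendsto (fun n => exp (-ell n) ^ (κ - 1)) atTop (𝓝 (0 ^ (κ - 1))) :=
    (tendsto_exp_atBot.comp (tendsto_neg_atTop_atBot.comp tendsto_ell_atTop)).rpow_const
      (Or.inr (by linarith))
  have hexp := (continuous_exp.tendsto _).comp ((hδ.const_mul κ).neg)
  have := (hlogδ.mul hpow).mul hexp
  rw [one_mul] at this
  refine this.congr' ?_
  filter_upwards [eventually_ge_atTop 2] with n hn
  have : exp (-(κ * δ n)) =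
      exp (-ell n) * exp (-ell n) ^ (κ - 1) * exp (-(κ * (δ n - ell n))) := by
    rw [← exp_mul, ← exp_add, ← exp_add]
    ring_nf
  simp only [Function.comp_apply, this, ← natCast_mul_exp_neg_ell hn]
  ring

section DCutSum

noncomputable def dCutSum (n : ℕ) (t : ℝ) : ℝ :=
  ∑ i ∈ Icc (2 : ℕ) (9 ^ n),
    exp (-(n : ℝ)) * exp (-log (exp n + ((i : ℝ) - 1) * exp (-(n : ℝ))) * t)

theorem dCut_eq (β : ℕ → ℝ) (n : ℕ) (t : ℝ) :
    dCut β n t = exp n * exp (-((n : ℝ) / (1 + β n / n * ell n)) * t) + dCutSum n t :=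
  rfl

theorem dCutSum_eq_sum_range (n : ℕ) (t : ℝ) :
    dCutSum n t = ∑ k ∈ range (9 ^ n - 1),
      exp (-(n : ℝ)) * (exp n + (k + 1) * exp (-(n : ℝ))) ^ (-t) := by
  rw [dCutSum, ← Ico_add_one_right_eq_Icc, sum_Ico_eq_sum_range,
    show 9 ^ n + 1 - 2 = 9 ^ n - 1 by omega]
  refine sum_congr rfl fun k _ => ?_
  rw [rpow_def_of_pos (by positivity)]
  push_cast
  ring_nf

variable {t : ℝ}

theorem sub_one_mul_dCutSum_le (ht : 1 < t) (n : ℕ) :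
    (t - 1) * dCutSum n t ≤ exp (n * (1 - t)) := by
  rw [dCutSum_eq_sum_range, exp_mul]
  refine (sub_one_mul_sum_rpow_neg_le ht (exp_pos _) (exp_pos _) _).trans ?_
  have : 0 ≤ (exp n + ((9 ^ n - 1 : ℕ) : ℝ) * exp (-(n : ℝ))) ^ (1 - t) := by positivity
  linarith

theorem le_sub_one_mul_dCutSum (ht : 1 < t) (n : ℕ) :
    2 ^ (1 - t) * exp (n * (1 - t)) - exp ((log 9 - 1) * n * (1 - t)) ≤
      (t - 1) * dCutSum n t := by
  rw [dCutSum_eq_sum_range]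
  refine le_trans ?_ (le_sub_one_mul_sum_rpow_neg ht (exp_pos _) (exp_pos _) _)
  have hN : ((9 ^ n - 1 : ℕ) : ℝ) + 1 = 9 ^ n := by
    rw [Nat.cast_sub (Nat.one_le_pow _ _ (by norm_num))]
    push_cast
    ring
  have h9 : (9 : ℝ) ^ n * exp (-(n : ℝ)) = exp ((log 9 - 1) * n) := by
    rw [← rpow_natCast, rpow_def_of_pos (by norm_num), ← exp_add]
    ring_nf
  have hnt : 1 - t ≤ 0 := by linarith
  have hhead : (2 * exp n) ^ (1 - t) ≤ (exp n + exp (-(n : ℝ))) ^ (1 - t) := by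
    refine rpow_le_rpow_of_nonpos (by positivity) ?_ hnt
    have : exp (-(n : ℝ)) ≤ exp n := exp_le_exp.mpr (by linarith [n.cast_nonneg (α := ℝ)])
    linarith
  have htail :
      (exp n + 9 ^ n * exp (-(n : ℝ))) ^ (1 - t) ≤ exp ((log 9 - 1) * n) ^ (1 - t) := by
    refine rpow_le_rpow_of_nonpos (exp_pos _) ?_ hnt
    linarith [h9, exp_pos (n : ℝ)]
  rw [mul_rpow (by norm_num) (exp_pos _).le, ← exp_mul] at hhead
  rw [← exp_mul] at htail
  rw [hN]
  linarith

end DCutSum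

theorem one_lt_log_nine_sub_one : 1 < log 9 - 1 := by
  have : exp 2 < 9 := by
    have := exp_one_lt_d9
    rw [show (2 : ℝ) = 1 + 1 by norm_num, exp_add]
    nlinarith [exp_pos 1]
  linarith [(lt_log_iff_exp_lt (by norm_num)).mpr this]

theorem natCast_mul_exp_neg_mul_div_eq {n : ℕ} (hn : (n : ℝ) ≠ 0) (t κ : ℝ) :
    n * exp (-(κ * (n * (t - 1)))) / (n * (t - 1)) = exp (κ * n * (1 - t)) / (t - 1) := by
  field_simp
  ring_nf

theorem tendsto_dCutSum {τ : ℕ → ℝ} {c : ℝ}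
    (hτ : Tendsto (fun n : ℕ => n * (τ n - 1) - ell n) atTop (𝓝 c)) :
    Tendsto (fun n => dCutSum n (τ n)) atTop (𝓝 (exp (-c))) := by
  have hδ_top : Tendsto (fun n : ℕ => n * (τ n - 1)) atTop atTop :=
    (tendsto_ell_atTop.atTop_add hτ).congr fun n => add_sub_cancel _ _
  have hτ_one : Tendsto τ atTop (𝓝 1) := by
    have := ((hτ.div_atTop tendsto_natCast_atTop_atTop).add tendsto_ell_div_natCast).const_add 1
    rw [add_zero, add_zero] at this
    refine this.congr' ?_
    filter_upwards [eventually_ge_atTop 1] with n hn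
    have : (n : ℝ) ≠ 0 := by positivity
    field_simp
    ring
  have hmain : Tendsto (fun n : ℕ => n * exp (-(1 * (n * (τ n - 1)))) / (n * (τ n - 1))) atTop
      (𝓝 (exp (-c))) := by
    simpa using tendsto_natCast_mul_exp_neg_mul_div le_rfl hτ
  have htail := tendsto_natCast_mul_exp_neg_mul_div one_lt_log_nine_sub_one.le hτ
  rw [zero_rpow (by linarith [one_lt_log_nine_sub_one]), zero_mul] at htail
  have hfactor : Tendsto (fun n => (2 : ℝ) ^ (1 - τ n)) atTop (𝓝 1) := by
    simpa [Function.comp_def] using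
      ((continuous_const_rpow two_ne_zero).tendsto _).comp (hτ_one.const_sub 1)
  have hlower := (hfactor.mul hmain).sub htail
  rw [one_mul, sub_zero] at hlower
  have hτ_gt : ∀ᶠ n in atTop, 0 < τ n - 1 ∧ (n : ℝ) ≠ 0 := by
    filter_upwards [hδ_top.eventually_gt_atTop 0, eventually_ge_atTop 1] with n hδ hn
    exact ⟨pos_of_mul_pos_right hδ n.cast_nonneg, by positivity⟩
  refine tendsto_of_tendsto_of_tendsto_of_le_of_le' hlower hmain ?_ ?_
  · filter_upwards [hτ_gt] with n ⟨hτn, hn⟩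
    rw [natCast_mul_exp_neg_mul_div_eq hn, natCast_mul_exp_neg_mul_div_eq hn, mul_div_assoc',
      div_sub_div_same, div_le_iff₀ hτn]
    simpa [mul_comm] using le_sub_one_mul_dCutSum (by linarith : 1 < τ n) n
  · filter_upwards [hτ_gt] with n ⟨hτn, hn⟩
    rw [natCast_mul_exp_neg_mul_div_eq hn, le_div_iff₀ hτn, mul_comm]
    simpa using sub_one_mul_dCutSum_le (by linarith : 1 < τ n) n

/-- Case `β_n ≡ 1` of Barrera–Ycart: a profile cutoff at `(t_n, w_n)` with
profile `F(c) = 2 e^{-c}` occurs: for every real `c`,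
`d_n(t_n + c w_n) → 2 e^{-c}`. -/
theorem profile_cutoff_beta_one
    (β : ℕ → ℝ) (hβ : ∀ n, β n = 1) (c : ℝ) :
    Tendsto (fun n => dCut β n (cutT β n + c * cutW β n)) atTop
      (𝓝 (2 * Real.exp (-c))) := by
  have hτ : ∀ n, cutT β n + c * cutW β n = (1 + ell n / n) * (1 + c / n) := fun n => by
    simp only [cutW, cutT, hβ n]
    ring
  have hδ :
      Tendsto (fun n : ℕ => n * ((1 + ell n / n) * (1 + c / n) - 1) - ell n) atTop (𝓝 c) := by
    have := (tendsto_ell_div_natCast.const_mul c).const_add c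
    rw [mul_zero, add_zero] at this
    refine this.congr' ?_
    filter_upwards [eventually_ge_atTop 1] with n hn
    have : (n : ℝ) ≠ 0 := by positivity
    field_simp
    ring
  rw [two_mul]
  refine (tendsto_const_nhds.add (tendsto_dCutSum hδ)).congr' ?_
  filter_upwards [eventually_ge_atTop 1, tendsto_ell_atTop.eventually_gt_atTop 0] with n hn hℓ
  have : (n : ℝ) ≠ 0 := by positivity
  have : 1 + ell n / n ≠ 0 := by positivity
  rw [dCut_eq, hτ, hβ, ← exp_add]
  congr 2
  field_simp
  ring
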